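/- arXiv:math/9805059 — 3 statements merged into one kernel-verified Lean document; each statement's English description precedes it below -/
import Mathlib

section
/- The linear map γ : W → Hom(P₁, Q_s ⊗ H_{s1}) defined componentwise by γ_{li}(w) = (composition with the pairings) is injective. Consequently the affine map ζ : W → 𝐖 is a closed embedding. -/
open Module
open scoped TensorProduct

noncomputable section

variable {A H H₁ : Type*} [AddCommGroup A] [Module ℂ A] [AddCommGroup H] [Module ℂ H]
  [AddCommGroup H₁] [Module ℂ H₁]

/-- The map `(H₁)* ⊗ A → H*` induced by a (curried) composition `μ : H ⊗ A → H₁`. -/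
def dualInduced (μ : H →ₗ[ℂ] A →ₗ[ℂ] H₁) :
    (Module.Dual ℂ H₁ ⊗[ℂ] A) →ₗ[ℂ] Module.Dual ℂ H :=
  TensorProduct.lift (LinearMap.mk₂ ℂ (fun f a => f ∘ₗ μ.flip a)
    (fun f g a => by ext x; simp)
    (fun c f a => by ext x; simp)
    (fun f a b => by ext x; simp [LinearMap.flip_apply, map_add])
    (fun c f a => by ext x; simp [LinearMap.flip_apply, map_smul]))

lemma aux_pair {Nt HHt AAt B Hsp H1t : Type*}
    [AddCommGroup Nt] [Module ℂ Nt] [AddCommGroup HHt] [Module ℂ HHt]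
    [AddCommGroup AAt] [Module ℂ AAt] [AddCommGroup B] [Module ℂ B]
    [FiniteDimensional ℂ B] [AddCommGroup Hsp] [Module ℂ Hsp]
    [AddCommGroup H1t] [Module ℂ H1t]
    (pA : (HHt ⊗[ℂ] AAt) →ₗ[ℂ] H1t) (pB : (B ⊗[ℂ] H1t) →ₗ[ℂ] Hsp)
    (g : Module.Dual ℂ Nt) (h : Module.Dual ℂ Hsp) (b : B) (a : AAt) (z : Nt ⊗[ℂ] HHt) :
    TensorProduct.dualDistrib ℂ Nt (Module.Dual ℂ B ⊗[ℂ] Hsp)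
      (g ⊗ₜ (h ∘ₗ LinearMap.applyₗ b ∘ₗ dualTensorHom ℂ B Hsp))
      ((TensorProduct.map LinearMap.id
          (((dualTensorHomEquiv ℂ B Hsp).symm.toLinearMap.comp
              ((TensorProduct.curry pB).flip)).comp pA ∘ₗ LinearMap.id))
        ((TensorProduct.assoc ℂ Nt HHt AAt) (z ⊗ₜ a)))
    = TensorProduct.dualDistrib ℂ Nt HHt
        (g ⊗ₜ dualInduced (TensorProduct.curry pA)
          ((dualInduced ((TensorProduct.curry pB).flip) (h ⊗ₜ b)) ⊗ₜ a)) z := by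
  induction z using TensorProduct.induction_on with
  | zero => simp
  | add u v hu hv =>
      simp only [TensorProduct.add_tmul, map_add, hu, hv]
  | tmul n xi =>
      simp [dualInduced, TensorProduct.dualDistrib_apply, dualTensorHomEquiv,
        dualTensorHomEquivOfBasis_symm_cancel_right, TensorProduct.curry_apply,
        LinearMap.flip_apply]

/-- The linear map `γ : W → Hom(P₁, Q_s ⊗ H_{s1})`, given componentwise by composing
`φ_{li} ⊗ id` with the pairings `H_{li} ⊗ A_{i1} → H_{l1}` and the dual composition
`H_{l1} → B_{sl}* ⊗ H_{s1}`, is injective (so the affine map `ζ : W → 𝐖` is a closed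
embedding).

Data (abstract setting 2.1 of Drézet–Trautmann): `M i`, `N l` are finite-dimensional
complex vector spaces, `HH l i = H_{li}`, `AA i = A_{i1}`, `BB l = B_{sl}`, `Hs = H_{s1}`,
`H1 l = H_{l1}`; `pA l i : H_{li} ⊗ A_{i1} → H_{l1}` and `pB l : B_{sl} ⊗ H_{l1} → H_{s1}`
are the compositions; the hypotheses are the surjectivity of the induced dual maps
`H_{l1}* ⊗ A_{i1} → H_{li}*` and `H_{s1}* ⊗ B_{sl} → H_{l1}*`. -/
theorem stmt0 {ι κ : Type*}
    (M : ι → Type) (N : κ → Type) (HH : κ → ι → Type) (AA : ι → Type)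
    (BB : κ → Type) (Hs : Type) (H1 : κ → Type)
    [∀ i, AddCommGroup (M i)] [∀ i, Module ℂ (M i)] [∀ i, FiniteDimensional ℂ (M i)]
    [∀ l, AddCommGroup (N l)] [∀ l, Module ℂ (N l)] [∀ l, FiniteDimensional ℂ (N l)]
    [∀ l i, AddCommGroup (HH l i)] [∀ l i, Module ℂ (HH l i)]
    [∀ l i, FiniteDimensional ℂ (HH l i)]
    [∀ i, AddCommGroup (AA i)] [∀ i, Module ℂ (AA i)] [∀ i, FiniteDimensional ℂ (AA i)]
    [∀ l, AddCommGroup (BB l)] [∀ l, Module ℂ (BB l)] [∀ l, FiniteDimensional ℂ (BB l)]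
    [AddCommGroup Hs] [Module ℂ Hs] [FiniteDimensional ℂ Hs]
    [∀ l, AddCommGroup (H1 l)] [∀ l, Module ℂ (H1 l)] [∀ l, FiniteDimensional ℂ (H1 l)]
    (pA : ∀ l i, (HH l i ⊗[ℂ] AA i) →ₗ[ℂ] H1 l)
    (pB : ∀ l, (BB l ⊗[ℂ] H1 l) →ₗ[ℂ] Hs)
    (hA : ∀ l i, Function.Surjective (dualInduced (TensorProduct.curry (pA l i))))
    (hB : ∀ l, Function.Surjective (dualInduced ((TensorProduct.curry (pB l)).flip))) :
    Function.Injective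
      (fun (w : ∀ l i, M i →ₗ[ℂ] (N l ⊗[ℂ] HH l i)) =>
        (fun l i =>
          (TensorProduct.map LinearMap.id
              (((dualTensorHomEquiv ℂ (BB l) Hs).symm.toLinearMap.comp
                  ((TensorProduct.curry (pB l)).flip)).comp (pA l i) ∘ₗ
                LinearMap.id)) ∘ₗ
            (TensorProduct.assoc ℂ (N l) (HH l i) (AA i)).toLinearMap ∘ₗ
            (TensorProduct.map (w l i) LinearMap.id) :
          ∀ l i, (M i ⊗[ℂ] AA i) →ₗ[ℂ]
            (N l ⊗[ℂ] (Module.Dual ℂ (BB l) ⊗[ℂ] Hs))))  := by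
  intro w w' hw
  funext l i
  have hcomp := congrFun (congrFun hw l) i
  ext m
  have key : ∀ (g : Module.Dual ℂ (N l)) (h : Module.Dual ℂ Hs) (b : BB l) (a : AA i),
      TensorProduct.dualDistrib ℂ (N l) (HH l i)
        (g ⊗ₜ dualInduced (TensorProduct.curry (pA l i))
          ((dualInduced ((TensorProduct.curry (pB l)).flip) (h ⊗ₜ b)) ⊗ₜ a)) ((w l i) m)
      = TensorProduct.dualDistrib ℂ (N l) (HH l i)
        (g ⊗ₜ dualInduced (TensorProduct.curry (pA l i))
          ((dualInduced ((TensorProduct.curry (pB l)).flip) (h ⊗ₜ b)) ⊗ₜ a)) ((w' l i) m) := by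
    intro g h b a
    have h2 := congrArg (fun (T : (M i ⊗[ℂ] AA i) →ₗ[ℂ]
        (N l ⊗[ℂ] (Module.Dual ℂ (BB l) ⊗[ℂ] Hs))) =>
        TensorProduct.dualDistrib ℂ (N l) (Module.Dual ℂ (BB l) ⊗[ℂ] Hs)
          (g ⊗ₜ (h ∘ₗ LinearMap.applyₗ b ∘ₗ dualTensorHom ℂ (BB l) Hs)) (T (m ⊗ₜ a))) hcomp
    simp only [LinearMap.coe_comp, Function.comp_apply, LinearEquiv.coe_coe,
      TensorProduct.map_tmul, LinearMap.id_coe, id_eq] at h2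
    rwa [aux_pair, aux_pair] at h2
  rw [← sub_eq_zero, ← Module.forall_dual_apply_eq_zero_iff ℂ ((w l i) m - (w' l i) m)]
  intro Phi
  rw [map_sub, sub_eq_zero]
  obtain ⟨t, rfl⟩ := (TensorProduct.dualDistribEquiv ℂ (N l) (HH l i)).surjective Phi
  show TensorProduct.dualDistrib ℂ (N l) (HH l i) t ((w l i) m)
      = TensorProduct.dualDistrib ℂ (N l) (HH l i) t ((w' l i) m)
  induction t using TensorProduct.induction_on with
  | zero => simp
  | add u v hu hv => simp only [map_add, LinearMap.add_apply, hu, hv]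
  | tmul g f =>
      obtain ⟨t, rfl⟩ := hA l i f
      induction t using TensorProduct.induction_on with
      | zero => simp
      | add u v hu hv =>
          simp only [map_add, TensorProduct.tmul_add, LinearMap.add_apply, hu, hv]
      | tmul g1 a =>
          obtain ⟨s, rfl⟩ := hB l g1
          induction s using TensorProduct.induction_on with
          | zero => simp [TensorProduct.zero_tmul]
          | add u v hu hv =>
              simp only [map_add, TensorProduct.add_tmul, TensorProduct.tmul_add,
                LinearMap.add_apply, hu, hv]
          | tmul h b => exact key g h b a


end
end

section
/- Let W = Hom(2𝒪(−2), 𝒪(−1) ⊕ 𝒪) on ℙ₂ = ℙ(V), with elements written as matrices x = [[z₁, z₂],[q₁, q₂]] with z_i ∈ V*, q_i ∈ S²V*. Fix the polarization Λ = (1/2, −μ₁, −μ₂) with μ₁ + μ₂ = 1 and μ₁ > 1/2. Define x to be G_red-stable if for every choice of subspaces M′ ⊆ ℂ², N′₁ ⊆ ℂ, N′₂ ⊆ ℂ, not all zero and not all full, such that the component maps of x send M′ into N′₁ (via (z₁,z₂)) and into N′₂ (via (q₁,q₂)), one has (1/2)dim M′ < μ₁ dim N′₁ + μ₂ dim N′₂.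 Then: (i) x is G_red-stable if and only if z₁ ∧ z₂ ≠ 0 and (q₁, q₂) ≠ (0,0); (ii) x is G-stable (i.e. for every z ∈ V*, the matrix [[z₁, z₂],[q₁ + z z₁, q₂ + z z₂]] is G_red-stable) if and only if z₁ ∧ z₂ ≠ 0 and z₁q₂ − z₂q₁ ≠ 0 in S³V*. -/
/-
Part (i) is bookkeeping: each of `M′`, `N′₁`, `N′₂` is zero or full except `M′`, which may also
be a line, and the only compatible choices that violate the inequality are a line killed by
`(z₁, z₂)` (weight `1/2 ≥ μ₂`) and `M′ = ℂ²` killed by `(q₁, q₂)` (weight `1 ≥ μ₁`).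

For (ii), by (i) a point of the `H`-orbit is unstable iff `z₁ ∧ z₂ = 0` or its `q`-row
vanishes, and the latter forces `z₁q₂ − z₂q₁ = 0` since this cubic is `H`-invariant. Conversely,
if `z₁q₂ = z₂q₁` with `z₁, z₂` independent linear forms, then the prime `z₁` does not divide
`z₂`, hence divides `q₁`; so `(q₁, q₂) = r·(z₁, z₂)` for a linear form `r`, and the point of the
`H`-orbit given by `z = −r` has `q₁ = q₂ = 0`.
-/

open MvPolynomial Module

/-- King stability, with respect to the polarization `(1/2, −μ₁, −μ₂)`, of the morphism
`2𝒪(−2) → 𝒪(−1) ⊕ 𝒪` on `ℙ₂ = ℙ(V)` (`dim V = 3`) given by the matrix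
`[[z₁, z₂], [q₁, q₂]]`:  for every choice of subspaces `M′ ⊆ ℂ²`, `N′₁, N′₂ ⊆ ℂ`, not all
zero and not all full, compatible with the morphism (i.e. if `N′ᵢ = 0` then the
corresponding row kills `M′`), one has `(1/2)·dim M′ < μ₁·dim N′₁ + μ₂·dim N′₂`. -/
def GredStable (μ₁ μ₂ : ℚ) (z₁ z₂ q₁ q₂ : MvPolynomial (Fin 3) ℂ) : Prop :=
  ∀ (M' : Submodule ℂ (Fin 2 → ℂ)) (N'₁ N'₂ : Submodule ℂ ℂ),
    (N'₁ = ⊥ → ∀ v ∈ M', v 0 • z₁ + v 1 • z₂ = 0) →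
    (N'₂ = ⊥ → ∀ v ∈ M', v 0 • q₁ + v 1 • q₂ = 0) →
    ¬(M' = ⊥ ∧ N'₁ = ⊥ ∧ N'₂ = ⊥) →
    ¬(M' = ⊤ ∧ N'₁ = ⊤ ∧ N'₂ = ⊤) →
    (1 / 2 : ℚ) * (finrank ℂ M' : ℚ) <
      μ₁ * (finrank ℂ N'₁ : ℚ) + μ₂ * (finrank ℂ N'₂ : ℚ)

namespace MvPolynomial

variable {σ R K : Type*}

attribute [local instance] MvPolynomial.gradedAlgebra in
theorem IsHomogeneous.homogeneousComponent_mul_add [CommSemiring R] {a : MvPolynomial σ R}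
    {m : ℕ} (ha : a.IsHomogeneous m) (n : ℕ) (b : MvPolynomial σ R) :
    homogeneousComponent (m + n) (a * b) = a * homogeneousComponent n b := by
  simp only [← decomposition.decompose'_apply]
  exact DirectSum.coe_decompose_mul_add_of_left_mem (homogeneousSubmodule σ R)
    ((mem_homogeneousSubmodule m a).2 ha)

section Field

variable [Field K] {z₁ z₂ : MvPolynomial σ K}

theorem IsHomogeneous.prime_of_one {p : MvPolynomial σ K} (hp : p.IsHomogeneous 1)
    (hp0 : p ≠ 0) : Prime p := by
  refine (irreducible_of_totalDegree_eq_one (hp.totalDegree hp0) fun x hx => ?_).prime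
  obtain ⟨d, hd⟩ := exists_coeff_ne_zero hp0
  exact isUnit_iff_ne_zero.2 (ne_zero_of_dvd_ne_zero hd (hx d))

theorem IsHomogeneous.not_dvd_of_linearIndependent (hz₁ : z₁.IsHomogeneous 1)
    (hz₂ : z₂.IsHomogeneous 1) (hli : LinearIndependent K ![z₁, z₂]) : ¬z₁ ∣ z₂ := by
  rintro ⟨u, hu⟩
  have hz₁0 : z₁ ≠ 0 := by simpa using hli.ne_zero 0
  have hz₂u : z₂ = coeff 0 u • z₁ :=
    calc z₂ = homogeneousComponent (1 + 0) (z₁ * u) := by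
          rw [← hu, homogeneousComponent_eq_self hz₂]
      _ = coeff 0 u • z₁ := by
          rw [hz₁.homogeneousComponent_mul_add, homogeneousComponent_zero, smul_eq_C_mul,
            mul_comm]
  exact (LinearIndependent.pair_iff' hz₁0).1 hli _ hz₂u.symm

theorem exists_eq_mul_of_mul_eq_mul {q₁ q₂ : MvPolynomial σ K} {n : ℕ}
    (hz₁ : z₁.IsHomogeneous 1) (hz₂ : z₂.IsHomogeneous 1) (hq₁ : q₁.IsHomogeneous (n + 1))
    (hli : LinearIndependent K ![z₁, z₂]) (h : z₁ * q₂ = z₂ * q₁) :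
    ∃ r : MvPolynomial σ K, r.IsHomogeneous n ∧ q₁ = z₁ * r ∧ q₂ = z₂ * r := by
  have hz₁0 : z₁ ≠ 0 := by simpa using hli.ne_zero 0
  obtain ⟨r, hr⟩ : z₁ ∣ q₁ :=
    ((hz₁.prime_of_one hz₁0).dvd_or_dvd ⟨q₂, h.symm⟩).resolve_left
      (hz₁.not_dvd_of_linearIndependent hz₂ hli)
  have hq₁r : q₁ = z₁ * homogeneousComponent n r := by
    rw [← homogeneousComponent_eq_self hq₁, hr, add_comm, hz₁.homogeneousComponent_mul_add]
  refine ⟨_, homogeneousComponent_isHomogeneous n r, hq₁r, mul_left_cancel₀ hz₁0 ?_⟩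
  rw [h, hq₁r]
  ring

end Field

end MvPolynomial

section Submodules

variable {K V : Type*} [Field K] [AddCommGroup V] [Module K V]

theorem Submodule.finrank_le_one_of_ne_top {M' : Submodule K (Fin 2 → K)} (h : M' ≠ ⊤) :
    finrank K M' ≤ 1 := by
  simpa using Submodule.finrank_lt h

theorem Submodule.eq_bot_of_linearIndependent_pair {x y : V} (hli : LinearIndependent K ![x, y])
    {M' : Submodule K (Fin 2 → K)} (h : ∀ v ∈ M', v 0 • x + v 1 • y = 0) : M' = ⊥ := by
  refine (Submodule.eq_bot_iff M').2 fun v hv => ?_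
  obtain ⟨h0, h1⟩ := LinearIndependent.pair_iff.1 hli _ _ (h v hv)
  ext i
  fin_cases i <;> simp [h0, h1]

end Submodules

section GredStable

variable {μ₁ μ₂ : ℚ} {z₁ z₂ q₁ q₂ : MvPolynomial (Fin 3) ℂ}

theorem GredStable.linearIndependent (hμ : μ₁ + μ₂ = 1) (hμ₁ : 1 / 2 < μ₁)
    (h : GredStable μ₁ μ₂ z₁ z₂ q₁ q₂) : LinearIndependent ℂ ![z₁, z₂] := by
  refine LinearIndependent.pair_iff.2 fun s t hst => ?_
  by_contra hne
  have hv : ![s, t] ≠ 0 := by simpa [_root_.funext_iff, Fin.forall_fin_two, not_and_or] using hne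
  have hline := h (Submodule.span ℂ {![s, t]}) ⊥ ⊤
    (fun _ v hv => by
      obtain ⟨a, rfl⟩ := Submodule.mem_span_singleton.1 hv
      simp [mul_smul, ← smul_add, hst])
    (by simp) (by simp [hv]) (by simp)
  simp only [finrank_span_singleton hv, finrank_bot, finrank_top, finrank_self, Nat.cast_one,
    Nat.cast_zero] at hline
  linarith

theorem GredStable.not_eq_zero_and_eq_zero (hμ : μ₁ + μ₂ = 1) (hμ₂ : 0 < μ₂)
    (h : GredStable μ₁ μ₂ z₁ z₂ q₁ q₂) : ¬(q₁ = 0 ∧ q₂ = 0) := by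
  rintro ⟨rfl, rfl⟩
  have hplane := h ⊤ ⊤ ⊥ (by simp) (by simp) (by simp) (by simp)
  simp only [finrank_top, finrank_fin_fun, finrank_self, finrank_bot, Nat.cast_ofNat,
    Nat.cast_one, Nat.cast_zero] at hplane
  linarith

theorem gredStable_iff (hμ : μ₁ + μ₂ = 1) (hμ₂ : 0 < μ₂) (hμ₁ : 1 / 2 < μ₁) :
    GredStable μ₁ μ₂ z₁ z₂ q₁ q₂ ↔ LinearIndependent ℂ ![z₁, z₂] ∧ ¬(q₁ = 0 ∧ q₂ = 0) := by
  refine ⟨fun h => ⟨h.linearIndependent hμ hμ₁, h.not_eq_zero_and_eq_zero hμ hμ₂⟩, ?_⟩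
  rintro ⟨hli, hq⟩ M' N'₁ N'₂ hz hq' hne_bot hne_top
  rcases Ideal.eq_bot_or_top N'₁ with rfl | rfl <;> rcases Ideal.eq_bot_or_top N'₂ with rfl | rfl
  · have := Submodule.eq_bot_of_linearIndependent_pair hli (hz rfl)
    tauto
  · rw [Submodule.eq_bot_of_linearIndependent_pair hli (hz rfl)]
    simp [hμ₂]
  · have hM' : M' ≠ ⊤ := by
      rintro rfl
      exact hq ⟨by simpa using hq' rfl ![1, 0], by simpa using hq' rfl ![0, 1]⟩
    have : (finrank ℂ M' : ℚ) ≤ 1 := by exact_mod_cast Submodule.finrank_le_one_of_ne_top hM'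
    simp only [finrank_top, finrank_self, finrank_bot, Nat.cast_one, Nat.cast_zero]
    linarith
  · have : (finrank ℂ M' : ℚ) ≤ 1 := by
      exact_mod_cast Submodule.finrank_le_one_of_ne_top fun hM' => hne_top ⟨hM', rfl, rfl⟩
    simp only [finrank_top, finrank_self, Nat.cast_one]
    linarith

end GredStable

theorem stmt14_general (μ₁ μ₂ : ℚ) (hμsum : μ₁ + μ₂ = 1) (hμ₂pos : 0 < μ₂) (hμ₁ : 1 / 2 < μ₁)
    (z₁ z₂ q₁ q₂ : MvPolynomial (Fin 3) ℂ)
    (hz₁ : z₁.IsHomogeneous 1) (hz₂ : z₂.IsHomogeneous 1)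
    (hq₁ : q₁.IsHomogeneous 2) :
    (GredStable μ₁ μ₂ z₁ z₂ q₁ q₂ ↔
      (LinearIndependent ℂ ![z₁, z₂] ∧ ¬(q₁ = 0 ∧ q₂ = 0))) ∧
    ((∀ z : MvPolynomial (Fin 3) ℂ, z.IsHomogeneous 1 →
        GredStable μ₁ μ₂ z₁ z₂ (q₁ + z * z₁) (q₂ + z * z₂)) ↔
      (LinearIndependent ℂ ![z₁, z₂] ∧ z₁ * q₂ - z₂ * q₁ ≠ 0)) := by
  refine ⟨gredStable_iff hμsum hμ₂pos hμ₁, ?_⟩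
  simp only [gredStable_iff hμsum hμ₂pos hμ₁]
  refine ⟨fun h => ?_, ?_⟩
  · have hli := (h 0 (isHomogeneous_zero _ _ 1)).1
    refine ⟨hli, fun hdet => ?_⟩
    obtain ⟨r, hr, hq₁r, hq₂r⟩ :=
      exists_eq_mul_of_mul_eq_mul hz₁ hz₂ hq₁ hli (sub_eq_zero.1 hdet)
    exact (h (-r) hr.neg).2 ⟨by rw [hq₁r]; ring, by rw [hq₂r]; ring⟩
  · rintro ⟨hli, hdet⟩ z -
    refine ⟨hli, fun ⟨h₁, h₂⟩ => hdet ?_⟩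
    linear_combination z₁ * h₂ - z₂ * h₁

/-- For the polarization with `μ₁ > 1/2`:
(i) `x = [[z₁,z₂],[q₁,q₂]]` is `G_red`-stable iff `z₁ ∧ z₂ ≠ 0` and `(q₁,q₂) ≠ (0,0)`;
(ii) `x` is `G`-stable (every point of its `H`-orbit is `G_red`-stable) iff
`z₁ ∧ z₂ ≠ 0` and `z₁q₂ − z₂q₁ ≠ 0` in `S³V*`. -/
theorem stmt14 (μ₁ μ₂ : ℚ) (hμsum : μ₁ + μ₂ = 1) (hμ₂pos : 0 < μ₂) (hμ₁ : 1 / 2 < μ₁)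
    (z₁ z₂ q₁ q₂ : MvPolynomial (Fin 3) ℂ)
    (hz₁ : z₁.IsHomogeneous 1) (hz₂ : z₂.IsHomogeneous 1)
    (hq₁ : q₁.IsHomogeneous 2) (hq₂ : q₂.IsHomogeneous 2) :
    (GredStable μ₁ μ₂ z₁ z₂ q₁ q₂ ↔
      (LinearIndependent ℂ ![z₁, z₂] ∧ ¬(q₁ = 0 ∧ q₂ = 0))) ∧
    ((∀ z : MvPolynomial (Fin 3) ℂ, z.IsHomogeneous 1 →
        GredStable μ₁ μ₂ z₁ z₂ (q₁ + z * z₁) (q₂ + z * z₂)) ↔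
      (LinearIndependent ℂ ![z₁, z₂] ∧ z₁ * q₂ - z₂ * q₁ ≠ 0)) :=
  stmt14_general μ₁ μ₂ hμsum hμ₂pos hμ₁ z₁ z₂ q₁ q₂ hz₁ hz₂ hq₁
end

section
/- Suppose Φ = (Φ₁, Φ₂) : 𝒪(−2) ⊗ ℂ² → 𝒪(−1) ⊕ (𝒪 ⊗ ℂᵏ) on ℙ_n is a generic morphism (i.e. the induced linear map f₁ : ℂ² → V* has rank 2) with image plane P = Im(f₁) ⊂ V* cutting out ℙ_{n−2} ⊂ ℙ_n. Then ker(Φ₁) ≅ 𝒪(−3), Im(Φ₁) ≅ ℐ_{ℙ_{n−2}}(−1), and the restriction Φ′ : 𝒪(−3) → 𝒪 ⊗ ℂᵏ of Φ₂ to ker(Φ₁) vanishes on ℙ_{n−2}, hence induces a linear map f′ : (ℂᵏ)* → H⁰(ℐ_{ℙ_{n−2}}(3)). -/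
open MvPolynomial

/-
Two linearly independent linear forms `z₁, z₂` in the polynomial ring (a UFD) are
non-associated primes. Hence `z₁ ∣ b z₂` forces `z₁ ∣ b`, so every syzygy `a z₁ + b z₂ = 0`
is a multiple of the Koszul syzygy `(z₂, -z₁)`, which is `ker Φ₁ ≅ 𝒪(-3)`.
-/

theorem Prime.mul_add_mul_eq_zero_iff {R : Type*} [CommRing R] [IsDomain R] {p q : R}
    (hp : Prime p) (hpq : ¬ p ∣ q) (a b : R) :
    a * p + b * q = 0 ↔ ∃ c, a = c * q ∧ b = -(c * p) := by
  constructor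
  · intro h
    have hdvd : p ∣ b * q := ⟨-a, by linear_combination h⟩
    obtain ⟨d, rfl⟩ := (hp.dvd_or_dvd hdvd).resolve_right hpq
    have hpa : p * (a + d * q) = 0 := by linear_combination h
    have ha : a + d * q = 0 := (mul_eq_zero.mp hpa).resolve_left hp.ne_zero
    exact ⟨-d, by linear_combination ha, by ring⟩
  · rintro ⟨c, rfl, rfl⟩
    ring

namespace MvPolynomial

variable {σ K : Type*} [Field K]

theorem prime_of_totalDegree_eq_one {p : MvPolynomial σ K} (hp : p.totalDegree = 1) :
    Prime p := by
  have hp0 : p ≠ 0 := by rintro rfl; simp at hp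
  refine (irreducible_of_totalDegree_eq_one hp fun x hx => ?_).prime
  refine isUnit_iff_ne_zero.mpr fun hx0 => hp0 (MvPolynomial.ext _ _ fun i => ?_)
  simpa [hx0] using hx i

theorem not_dvd_of_linearIndependent_of_totalDegree_le {p q : MvPolynomial σ K}
    (hind : LinearIndependent K ![p, q]) (hdeg : q.totalDegree ≤ p.totalDegree) :
    ¬ p ∣ q := by
  rintro ⟨u, rfl⟩
  have hp0 : p ≠ 0 := by simpa using hind.ne_zero 0
  have hu0 : u ≠ 0 := by rintro rfl; simpa using hind.ne_zero 1
  rw [totalDegree_mul_of_isDomain hp0 hu0] at hdeg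
  obtain ⟨r, rfl⟩ : ∃ r, u = C r :=
    ⟨_, totalDegree_eq_zero_iff_eq_C.mp (by omega)⟩
  have hrel : r • p + (-1 : K) • (p * C r) = 0 := by
    rw [smul_eq_C_mul, smul_eq_C_mul]
    simp only [map_neg, map_one]
    ring
  simpa using (LinearIndependent.pair_iff.mp hind _ _ hrel).2

end MvPolynomial

theorem stmt17_general (n k : ℕ)
    (z₁ z₂ : MvPolynomial (Fin (n + 1)) ℂ)
    (hz₁ : z₁.IsHomogeneous 1) (hz₂ : z₂.IsHomogeneous 1)
    (hind : LinearIndependent ℂ ![z₁, z₂])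
    (q₁ q₂ : Fin k → MvPolynomial (Fin (n + 1)) ℂ)
    (hq₁ : ∀ j, (q₁ j).IsHomogeneous 2) (hq₂ : ∀ j, (q₂ j).IsHomogeneous 2) :
    (∀ a b : MvPolynomial (Fin (n + 1)) ℂ,
      a * z₁ + b * z₂ = 0 ↔ ∃ c : MvPolynomial (Fin (n + 1)) ℂ, a = c * z₂ ∧ b = -(c * z₁)) ∧
    (∀ g : MvPolynomial (Fin (n + 1)) ℂ,
      (∃ a b : MvPolynomial (Fin (n + 1)) ℂ, g = a * z₁ + b * z₂) ↔
        g ∈ Ideal.span {z₁, z₂}) ∧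
    (∀ j : Fin k,
      z₂ * q₁ j - z₁ * q₂ j ∈ Ideal.span {z₁, z₂} ∧
      (z₂ * q₁ j - z₁ * q₂ j).IsHomogeneous 3) := by
  have hdeg₁ : z₁.totalDegree = 1 := hz₁.totalDegree (by simpa using hind.ne_zero 0)
  have hdeg₂ : z₂.totalDegree = 1 := hz₂.totalDegree (by simpa using hind.ne_zero 1)
  have hnd : ¬ z₁ ∣ z₂ :=
    not_dvd_of_linearIndependent_of_totalDegree_le hind (by rw [hdeg₁, hdeg₂])
  refine ⟨(prime_of_totalDegree_eq_one hdeg₁).mul_add_mul_eq_zero_iff hnd,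
    fun g => by simp only [Ideal.mem_span_pair, eq_comm], fun j => ⟨?_, ?_⟩⟩
  · exact Ideal.mem_span_pair.mpr ⟨-q₂ j, q₁ j, by ring⟩
  · exact (hz₂.mul (hq₁ j)).sub (hz₁.mul (hq₂ j))

/-- Structure of a generic morphism `Φ = (Φ₁, Φ₂) : 𝒪(−2) ⊗ ℂ² → 𝒪(−1) ⊕ (𝒪 ⊗ ℂᵏ)` on
`ℙ_n = ℙ(V)`: if `Φ₁` corresponds to two linearly independent linear forms `z₁, z₂`
(rank-2 case, image plane `P = ⟨z₁, z₂⟩` cutting out `ℙ_{n−2}`) and `Φ₂` is given by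
quadrics `q₁ j, q₂ j`, then:
(1) `ker Φ₁ ≅ 𝒪(−3)`: a pair `(a,b)` satisfies `a z₁ + b z₂ = 0` iff `(a,b) = (c z₂, −c z₁)`;
(2) `Im Φ₁ ≅ ℐ_{ℙ_{n−2}}(−1)`: `g` is of the form `a z₁ + b z₂` iff `g` lies in the ideal
generated by `z₁, z₂`;
(3) the restriction `Φ′` of `Φ₂` to `ker Φ₁` vanishes on `ℙ_{n−2}`, i.e. its components
`z₂·q₁ j − z₁·q₂ j` are cubics lying in the ideal `(z₁, z₂)`; hence `Φ′` induces a linear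
map `f′ : (ℂᵏ)* → H⁰(ℐ_{ℙ_{n−2}}(3))`. -/
theorem stmt17 (n k : ℕ) (hn : 2 ≤ n)
    (z₁ z₂ : MvPolynomial (Fin (n + 1)) ℂ)
    (hz₁ : z₁.IsHomogeneous 1) (hz₂ : z₂.IsHomogeneous 1)
    (hind : LinearIndependent ℂ ![z₁, z₂])
    (q₁ q₂ : Fin k → MvPolynomial (Fin (n + 1)) ℂ)
    (hq₁ : ∀ j, (q₁ j).IsHomogeneous 2) (hq₂ : ∀ j, (q₂ j).IsHomogeneous 2) :
    (∀ a b : MvPolynomial (Fin (n + 1)) ℂ,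
      a * z₁ + b * z₂ = 0 ↔ ∃ c : MvPolynomial (Fin (n + 1)) ℂ, a = c * z₂ ∧ b = -(c * z₁)) ∧
    (∀ g : MvPolynomial (Fin (n + 1)) ℂ,
      (∃ a b : MvPolynomial (Fin (n + 1)) ℂ, g = a * z₁ + b * z₂) ↔
        g ∈ Ideal.span {z₁, z₂}) ∧
    (∀ j : Fin k,
      z₂ * q₁ j - z₁ * q₂ j ∈ Ideal.span {z₁, z₂} ∧
      (z₂ * q₁ j - z₁ * q₂ j).IsHomogeneous 3) :=
  stmt17_general n k z₁ z₂ hz₁ hz₂ hind q₁ q₂ hq₁ hq₂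
end
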